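/- arXiv:0903.5079 — 2 statements merged into one kernel-verified Lean document; each statement's English description precedes it below -/
import Mathlib

section
/- The number of plane partitions ℓ with volume v satisfies log N(v) = O(v^{2/3}); more precisely, there is a constant C such that N(v) ≤ exp(C · (v^{2/3} + 1)) for all v ≥ 0. -/
/-- A plane partition: a map `ℕ × ℕ → ℕ` which is weakly decreasing in each coordinate
and has finite support. -/
def IsPlanePartition (ℓ : ℕ × ℕ → ℕ) : Prop :=
  (∀ x y : ℕ, ℓ (x + 1, y) ≤ ℓ (x, y)) ∧
  (∀ x y : ℕ, ℓ (x, y + 1) ≤ ℓ (x, y)) ∧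
  (Set.Finite {p : ℕ × ℕ | ℓ p ≠ 0})

/-- The volume of a plane partition: the (finite) sum of all its heights. -/
noncomputable def ppVolume (ℓ : ℕ × ℕ → ℕ) : ℕ := ∑ᶠ p : ℕ × ℕ, ℓ p

/-- The number of plane partitions of volume `v`. -/
noncomputable def numPP (v : ℕ) : ℕ :=
  Nat.card {ℓ : ℕ × ℕ → ℕ // IsPlanePartition ℓ ∧ ppVolume ℓ = v}

/-!
A plane partition `ℓ` is determined by its corners `c p = ℓ p - max (ℓ (p + e₁)) (ℓ (p + e₂))`,
recovered from the largest `x + y` downwards, and Abel summation along rows and columns gives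
`∑ c (x, y) * (x + y + 2) ≤ 2 v`. By Rankin's trick the number of such `c : [0, v)² → ℕ` is at
most `q ^ (-2v) * ∏ (1 - q ^ (x + y + 2))⁻¹` for every `q ∈ (0, 1)`. With `q = s²`, AM-GM gives
`1 - s ^ (2k) ≥ k s ^ (k - 1) (1 - s²)`; as at most `k - 1` points have weight `k`, the product
is `exp (O ((1 - s)⁻²))`, and `1 - s ≍ v ^ (-1/3)` balances this against
`q ^ (-2v) = exp (O (v (1 - s)))`.
-/

open Finset Real

theorem Antitone.sum_sub_succ_mul_le {f : ℕ → ℕ} (hf : Antitone f) (N : ℕ) :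
    ∑ x ∈ range N, (f x - f (x + 1)) * (x + 1) ≤ ∑ x ∈ range N, f x := by
  suffices h : ∑ x ∈ range N, (f x - f (x + 1)) * (x + 1) + N * f N = ∑ x ∈ range N, f x by
    omega
  induction N with
  | zero => simp
  | succ N ih =>
    have hN : f (N + 1) ≤ f N := hf N.le_succ
    rw [sum_range_succ, sum_range_succ, ← ih]
    zify [hN]
    ring

section WeightSublevel

variable {ι : Type*} [Fintype ι] [DecidableEq ι] {w : ι → ℕ}

def weightSublevel (w : ι → ℕ) (n : ℕ) : Finset (ι → ℕ) :=
  {c ∈ Fintype.piFinset fun _ => range (n + 1) | ∑ i, c i * w i ≤ n}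

theorem mem_weightSublevel (hw : ∀ i, 0 < w i) {n : ℕ} {c : ι → ℕ} :
    c ∈ weightSublevel w n ↔ ∑ i, c i * w i ≤ n := by
  rw [weightSublevel, mem_filter, Fintype.mem_piFinset, and_iff_right_iff_imp]
  intro hc i
  have := (single_le_sum (fun j _ => Nat.zero_le (c j * w j)) (mem_univ i)).trans hc
  rw [mem_range]
  nlinarith [hw i]

/-- Rankin's trick: every `c` of weight at most `n` has `q ^ n ≤ q ^ (weight of c)`, and the
latter sum to a product of geometric series. -/
theorem card_weightSublevel_le (hw : ∀ i, 0 < w i) (n : ℕ) {q : ℝ} (hq0 : 0 < q)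
    (hq1 : q < 1) :
    ((weightSublevel w n).card : ℝ) ≤ (q ^ n)⁻¹ * ∏ i, (1 - q ^ w i)⁻¹ := by
  have hweight (c : ι → ℕ) : ∏ i, (q ^ w i) ^ c i = q ^ ∑ i, c i * w i := by
    rw [← prod_pow_eq_pow_sum]
    exact prod_congr rfl fun i _ => by rw [← pow_mul, mul_comm]
  rw [card_eq_sum_ones, Nat.cast_sum, Nat.cast_one]
  calc ∑ c ∈ weightSublevel w n, (1 : ℝ)
      ≤ ∑ c ∈ weightSublevel w n, (q ^ n)⁻¹ * ∏ i, (q ^ w i) ^ c i := by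
        refine sum_le_sum fun c hc => ?_
        rw [hweight, le_inv_mul_iff₀ (pow_pos hq0 n), mul_one]
        exact pow_le_pow_of_le_one hq0.le hq1.le ((mem_weightSublevel hw).1 hc)
    _ ≤ ∑ c ∈ Fintype.piFinset fun _ : ι => range (n + 1),
          (q ^ n)⁻¹ * ∏ i, (q ^ w i) ^ c i :=
        sum_le_sum_of_subset_of_nonneg (filter_subset _ _) fun _ _ _ => by positivity
    _ = (q ^ n)⁻¹ * ∏ i, ∑ j ∈ range (n + 1), (q ^ w i) ^ j := by
        rw [← mul_sum, prod_univ_sum]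
    _ ≤ (q ^ n)⁻¹ * ∏ i, (1 - q ^ w i)⁻¹ := by
        gcongr with i
        have hqw : q ^ w i < 1 := pow_lt_one₀ hq0.le hq1 (hw i).ne'
        simpa using geom_sum_Ico_le_of_lt_one (m := 0) (n := n + 1) (by positivity) hqw

end WeightSublevel

theorem succ_mul_pow_le_geom_sum_sq (s : ℝ) (k : ℕ) :
    (k + 1 : ℝ) * s ^ k ≤ ∑ j ∈ range (k + 1), (s ^ 2) ^ j := by
  have hpair : ∀ j ∈ range (k + 1), 2 * s ^ k ≤ (s ^ 2) ^ j + (s ^ 2) ^ (k - j) := by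
    intro j hj
    have hk : s ^ k = s ^ j * s ^ (k - j) := by
      rw [← pow_add, Nat.add_sub_cancel' (mem_range_succ_iff.1 hj)]
    rw [hk, ← pow_mul, ← pow_mul, mul_comm 2 j, mul_comm 2 (k - j), pow_mul, pow_mul]
    nlinarith [sq_nonneg (s ^ j - s ^ (k - j))]
  have hreflect : ∑ j ∈ range (k + 1), (s ^ 2) ^ (k - j) = ∑ j ∈ range (k + 1), (s ^ 2) ^ j :=
    sum_range_reflect (fun j => (s ^ 2) ^ j) (k + 1)
  have := sum_le_sum hpair
  rw [sum_add_distrib, hreflect, sum_const, card_range, nsmul_eq_mul] at this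
  push_cast at this
  linarith

theorem inv_one_sub_sq_pow_le_exp {s : ℝ} (hs0 : 0 < s) (hs1 : s < 1) (k : ℕ) :
    (1 - (s ^ 2) ^ (k + 1))⁻¹ ≤ exp (s ^ (k + 2) / ((k + 1) * (1 - s ^ 2))) := by
  have hs2 : 0 < 1 - s ^ 2 := by nlinarith
  have hlow : (k + 1) * s ^ k * (1 - s ^ 2) ≤ 1 - (s ^ 2) ^ (k + 1) := by
    rw [← geom_sum_mul_neg (s ^ 2) (k + 1)]
    exact mul_le_mul_of_nonneg_right (succ_mul_pow_le_geom_sum_sq s k) hs2.le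
  have hpos : 0 < (k + 1) * s ^ k * (1 - s ^ 2) := by positivity
  have ha : 0 < 1 - (s ^ 2) ^ (k + 1) := hpos.trans_le hlow
  calc (1 - (s ^ 2) ^ (k + 1))⁻¹
      = (s ^ 2) ^ (k + 1) / (1 - (s ^ 2) ^ (k + 1)) + 1 := by field_simp; ring
    _ ≤ exp ((s ^ 2) ^ (k + 1) / (1 - (s ^ 2) ^ (k + 1))) := add_one_le_exp _
    _ ≤ exp (s ^ (k + 2) / ((k + 1) * (1 - s ^ 2))) := by
        refine exp_le_exp.2 ?_
        calc (s ^ 2) ^ (k + 1) / (1 - (s ^ 2) ^ (k + 1))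
            ≤ (s ^ 2) ^ (k + 1) / ((k + 1) * s ^ k * (1 - s ^ 2)) := by gcongr
          _ = s ^ (k + 2) / ((k + 1) * (1 - s ^ 2)) := by field_simp; ring

theorem sum_range_product_add_le {F : ℕ → ℝ} (hF : ∀ j, 0 ≤ F j) (N : ℕ) :
    ∑ p ∈ range N ×ˢ range N, F (p.1 + p.2) ≤ ∑ j ∈ range (2 * N), (j + 1) * F j := by
  have hmaps : ∀ p ∈ range N ×ˢ range N, p.1 + p.2 ∈ range (2 * N) := by
    intro p hp
    rw [mem_product, mem_range, mem_range] at hp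
    rw [mem_range]
    omega
  rw [← sum_fiberwise_of_maps_to' hmaps]
  refine sum_le_sum fun j _ => ?_
  rw [sum_const, nsmul_eq_mul]
  gcongr
  · exact hF j
  · have : ((range N ×ˢ range N).filter fun p => p.1 + p.2 = j) ⊆ antidiagonal j :=
      fun p hp => mem_antidiagonal.2 (mem_filter.1 hp).2
    exact_mod_cast (card_le_card this).trans (Finset.Nat.card_antidiagonal j).le

theorem prod_range_product_inv_one_sub_le_exp {s : ℝ} (hs0 : 0 < s) (hs1 : s < 1) (N : ℕ) :
    ∏ p ∈ range N ×ˢ range N, (1 - (s ^ 2) ^ (p.1 + p.2 + 2))⁻¹ ≤ exp (1 / (1 - s) ^ 2) := by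
  have hs2 : 0 < 1 - s ^ 2 := by nlinarith
  set F : ℕ → ℝ := fun j => s ^ (j + 3) / ((j + 2) * (1 - s ^ 2))
  have hF : ∀ j, 0 ≤ F j := fun j => by positivity
  calc ∏ p ∈ range N ×ˢ range N, (1 - (s ^ 2) ^ (p.1 + p.2 + 2))⁻¹
      ≤ ∏ p ∈ range N ×ˢ range N, exp (F (p.1 + p.2)) := by
        refine prod_le_prod (fun p _ => ?_) fun p _ => ?_
        · have : (s ^ 2) ^ (p.1 + p.2 + 2) < 1 :=
            pow_lt_one₀ (by positivity) (by nlinarith) (by omega)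
          exact inv_nonneg.2 (by linarith)
        · refine (inv_one_sub_sq_pow_le_exp hs0 hs1 (p.1 + p.2 + 1)).trans_eq ?_
          simp only [F]
          push_cast
          ring_nf
    _ = exp (∑ p ∈ range N ×ˢ range N, F (p.1 + p.2)) := (exp_sum _ _).symm
    _ ≤ exp (1 / (1 - s) ^ 2) := by
        gcongr
        calc ∑ p ∈ range N ×ˢ range N, F (p.1 + p.2)
            ≤ ∑ j ∈ range (2 * N), (j + 1) * F j := sum_range_product_add_le hF N
          _ ≤ ∑ j ∈ range (2 * N), s ^ j / (1 - s ^ 2) := by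
              refine sum_le_sum fun j _ => ?_
              simp only [F]
              have hpow : s ^ (j + 3) ≤ s ^ j :=
                pow_le_pow_of_le_one hs0.le hs1.le (by omega)
              rw [← mul_div_assoc, div_le_div_iff₀ (by positivity) hs2]
              calc (j + 1) * s ^ (j + 3) * (1 - s ^ 2)
                  ≤ (j + 2) * s ^ j * (1 - s ^ 2) := by gcongr; linarith
                _ = s ^ j * ((j + 2) * (1 - s ^ 2)) := by ring
          _ = (∑ j ∈ range (2 * N), s ^ j) / (1 - s ^ 2) := (sum_div _ _ _).symm
          _ ≤ 1 / (1 - s) / (1 - s ^ 2) := by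
              gcongr
              simpa using geom_sum_Ico_le_of_lt_one (m := 0) (n := 2 * N) hs0.le hs1
          _ ≤ 1 / (1 - s) ^ 2 := by
              rw [div_div, sq]
              gcongr
              nlinarith

theorem inv_pow_le_exp {s : ℝ} (hs : 0 < s) (m : ℕ) : (s ^ m)⁻¹ ≤ exp (m * ((1 - s) / s)) := by
  rw [← inv_pow, exp_nat_mul]
  gcongr
  calc s⁻¹ = (1 - s) / s + 1 := by field_simp; ring
    _ ≤ exp ((1 - s) / s) := add_one_le_exp _

def ppCorner (ℓ : ℕ × ℕ → ℕ) (p : ℕ × ℕ) : ℕ :=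
  ℓ p - max (ℓ (p.1 + 1, p.2)) (ℓ (p.1, p.2 + 1))

theorem ppCorner_le_sub_fst (ℓ : ℕ × ℕ → ℕ) (p : ℕ × ℕ) :
    ppCorner ℓ p ≤ ℓ p - ℓ (p.1 + 1, p.2) :=
  Nat.sub_le_sub_left (le_max_left _ _) _

theorem ppCorner_le_sub_snd (ℓ : ℕ × ℕ → ℕ) (p : ℕ × ℕ) :
    ppCorner ℓ p ≤ ℓ p - ℓ (p.1, p.2 + 1) :=
  Nat.sub_le_sub_left (le_max_right _ _) _

namespace IsPlanePartition

variable {ℓ : ℕ × ℕ → ℕ}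

theorem antitone_fst (h : IsPlanePartition ℓ) (y : ℕ) : Antitone fun x => ℓ (x, y) :=
  antitone_nat_of_succ_le fun x => h.1 x y

theorem antitone_snd (h : IsPlanePartition ℓ) (x : ℕ) : Antitone fun y => ℓ (x, y) :=
  antitone_nat_of_succ_le (h.2.1 x)

theorem ppCorner_add_max (h : IsPlanePartition ℓ) (p : ℕ × ℕ) :
    ppCorner ℓ p + max (ℓ (p.1 + 1, p.2)) (ℓ (p.1, p.2 + 1)) = ℓ p :=
  Nat.sub_add_cancel (max_le (h.1 p.1 p.2) (h.2.1 p.1 p.2))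

theorem sum_le_ppVolume (h : IsPlanePartition ℓ) (F : Finset (ℕ × ℕ)) :
    ∑ p ∈ F, ℓ p ≤ ppVolume ℓ := by
  classical
  have hsupp : Function.support ℓ ⊆ ↑(F ∪ h.2.2.toFinset) := fun p hp => by
    simpa using Or.inr hp
  rw [ppVolume, finsum_eq_sum_of_support_subset ℓ hsupp]
  exact sum_le_sum_of_subset subset_union_left

theorem succ_mul_succ_le_ppVolume (h : IsPlanePartition ℓ) {x y : ℕ} (hxy : ℓ (x, y) ≠ 0) :
    (x + 1) * (y + 1) ≤ ppVolume ℓ :=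
  calc (x + 1) * (y + 1) = ∑ _p ∈ range (x + 1) ×ˢ range (y + 1), 1 := by simp
    _ ≤ ∑ p ∈ range (x + 1) ×ˢ range (y + 1), ℓ p := sum_le_sum fun ⟨a, b⟩ hab => by
        rw [mem_product, mem_range, mem_range] at hab
        have hx : ℓ (x, y) ≤ ℓ (a, y) := h.antitone_fst y (Nat.le_of_lt_succ hab.1)
        have hy : ℓ (a, y) ≤ ℓ (a, b) := h.antitone_snd a (Nat.le_of_lt_succ hab.2)
        omega
    _ ≤ ppVolume ℓ := h.sum_le_ppVolume _

theorem eq_zero_of_ppVolume_le (h : IsPlanePartition ℓ) {x y : ℕ}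
    (hxy : ppVolume ℓ ≤ x ∨ ppVolume ℓ ≤ y) : ℓ (x, y) = 0 := by
  by_contra hne
  have := h.succ_mul_succ_le_ppVolume hne
  rcases hxy with hx | hy <;> nlinarith

theorem eq_of_ppCorner_eq {ℓ' : ℕ × ℕ → ℕ} (h : IsPlanePartition ℓ) (h' : IsPlanePartition ℓ')
    (hc : ppCorner ℓ = ppCorner ℓ') : ℓ = ℓ' := by
  set B := 2 * (ppVolume ℓ + ppVolume ℓ')
  have hfar : ∀ d x y, B ≤ x + y + d → ℓ (x, y) = ℓ' (x, y) := by
    intro d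
    induction d with
    | zero =>
      intro x y hxy
      rw [h.eq_zero_of_ppVolume_le (by omega), h'.eq_zero_of_ppVolume_le (by omega)]
    | succ d ih =>
      intro x y hxy
      rw [← h.ppCorner_add_max, ← h'.ppCorner_add_max, hc, ih (x + 1) y (by omega),
        ih x (y + 1) (by omega)]
  funext p
  exact hfar B p.1 p.2 (by omega)

theorem sum_ppCorner_mul_le (h : IsPlanePartition ℓ) (N : ℕ) :
    ∑ p ∈ range N ×ˢ range N, ppCorner ℓ p * (p.1 + p.2 + 2) ≤ 2 * ppVolume ℓ := by
  have hrows : ∑ p ∈ range N ×ˢ range N, ppCorner ℓ p * (p.1 + 1)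
      ≤ ∑ p ∈ range N ×ˢ range N, ℓ p := by
    rw [sum_product_right, sum_product_right]
    refine sum_le_sum fun y _ => ?_
    calc ∑ x ∈ range N, ppCorner ℓ (x, y) * (x + 1)
        ≤ ∑ x ∈ range N, (ℓ (x, y) - ℓ (x + 1, y)) * (x + 1) :=
          sum_le_sum fun x _ => Nat.mul_le_mul_right _ (ppCorner_le_sub_fst ℓ (x, y))
      _ ≤ ∑ x ∈ range N, ℓ (x, y) := (h.antitone_fst y).sum_sub_succ_mul_le N
  have hcols : ∑ p ∈ range N ×ˢ range N, ppCorner ℓ p * (p.2 + 1)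
      ≤ ∑ p ∈ range N ×ˢ range N, ℓ p := by
    rw [sum_product, sum_product]
    refine sum_le_sum fun x _ => ?_
    calc ∑ y ∈ range N, ppCorner ℓ (x, y) * (y + 1)
        ≤ ∑ y ∈ range N, (ℓ (x, y) - ℓ (x, y + 1)) * (y + 1) :=
          sum_le_sum fun y _ => Nat.mul_le_mul_right _ (ppCorner_le_sub_snd ℓ (x, y))
      _ ≤ ∑ y ∈ range N, ℓ (x, y) := (h.antitone_snd x).sum_sub_succ_mul_le N
  have hsplit : ∑ p ∈ range N ×ˢ range N, ppCorner ℓ p * (p.1 + p.2 + 2)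
      = ∑ p ∈ range N ×ˢ range N, ppCorner ℓ p * (p.1 + 1)
        + ∑ p ∈ range N ×ˢ range N, ppCorner ℓ p * (p.2 + 1) := by
    rw [← sum_add_distrib]
    exact sum_congr rfl fun p _ => by ring
  have := h.sum_le_ppVolume (range N ×ˢ range N)
  omega

end IsPlanePartition

theorem numPP_le_card_weightSublevel (v : ℕ) :
    numPP v ≤
      (weightSublevel (fun p : ↥(range v ×ˢ range v) => p.1.1 + p.1.2 + 2) (2 * v)).card := by
  rw [← Nat.card_eq_finsetCard]
  refine Nat.card_le_card_of_injective
    (fun ℓ => ⟨fun p => ppCorner ℓ.1 p, (mem_weightSublevel (fun _ => by omega)).2 ?_⟩) ?_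
  · rw [sum_coe_sort (range v ×ˢ range v) fun p => ppCorner ℓ.1 p * (p.1 + p.2 + 2)]
    exact (ℓ.2.1.sum_ppCorner_mul_le v).trans_eq (by rw [ℓ.2.2])
  · rintro ⟨ℓ, h, hv⟩ ⟨ℓ', h', hv'⟩ hc
    refine Subtype.ext (h.eq_of_ppCorner_eq h' (funext fun ⟨x, y⟩ => ?_))
    by_cases hxy : (x, y) ∈ range v ×ˢ range v
    · exact congrFun (congrArg Subtype.val hc) ⟨(x, y), hxy⟩
    · rw [mem_product, mem_range, mem_range, not_and_or, not_lt, not_lt] at hxy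
      simp only [ppCorner, h.eq_zero_of_ppVolume_le (hv ▸ hxy),
        h'.eq_zero_of_ppVolume_le (hv' ▸ hxy), Nat.zero_sub]

theorem numPP_le_exp_of_lt_one (v : ℕ) {s : ℝ} (hs0 : 0 < s) (hs1 : s < 1) :
    (numPP v : ℝ) ≤ exp (4 * v * ((1 - s) / s) + 1 / (1 - s) ^ 2) := by
  have hw : ∀ p : ↥(range v ×ˢ range v), 0 < p.1.1 + p.1.2 + 2 := fun _ => by omega
  calc (numPP v : ℝ)
      ≤ (weightSublevel (fun p : ↥(range v ×ˢ range v) => p.1.1 + p.1.2 + 2) (2 * v)).card := by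
        exact_mod_cast numPP_le_card_weightSublevel v
    _ ≤ ((s ^ 2) ^ (2 * v))⁻¹ *
          ∏ p : ↥(range v ×ˢ range v), (1 - (s ^ 2) ^ (p.1.1 + p.1.2 + 2))⁻¹ :=
        card_weightSublevel_le hw (2 * v) (by positivity) (by nlinarith)
    _ ≤ exp (4 * v * ((1 - s) / s)) * exp (1 / (1 - s) ^ 2) := by
        rw [prod_coe_sort (range v ×ˢ range v)
          fun p => (1 - (s ^ 2) ^ (p.1 + p.2 + 2))⁻¹]
        have hq : ((s ^ 2) ^ (2 * v))⁻¹ ≤ exp (4 * v * ((1 - s) / s)) := by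
          rw [← pow_mul]
          convert inv_pow_le_exp hs0 (2 * (2 * v)) using 3
          push_cast
          ring
        have hs2 : s ^ 2 ≤ 1 := by nlinarith
        exact mul_le_mul hq (prod_range_product_inv_one_sub_le_exp hs0 hs1 v)
          (prod_nonneg fun _ _ => inv_nonneg.2 (sub_nonneg.2 (pow_le_one₀ (by positivity) hs2)))
          (exp_pos _).le
    _ = exp (4 * v * ((1 - s) / s) + 1 / (1 - s) ^ 2) := (exp_add _ _).symm

theorem numPP_le_exp_of_le_cube (v : ℕ) {m : ℝ} (hm : 1 ≤ m) (hv : (v : ℝ) ≤ m ^ 3) :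
    (numPP v : ℝ) ≤ exp (8 * m ^ 2) := by
  have hs0 : 0 < 1 - 1 / (2 * m) := by
    rw [sub_pos, div_lt_one (by linarith)]
    linarith
  have hs1 : 1 - 1 / (2 * m) < 1 := by
    have : 0 < 1 / (2 * m) := by positivity
    linarith
  refine (numPP_le_exp_of_lt_one v hs0 hs1).trans (exp_le_exp.2 ?_)
  have hratio : (1 - (1 - 1 / (2 * m))) / (1 - 1 / (2 * m)) = 1 / (2 * m - 1) := by
    field_simp
    ring
  have hsq : 1 / (1 - (1 - 1 / (2 * m))) ^ 2 = 4 * m ^ 2 := by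
    field_simp
    ring
  have hvm : 4 * v * (1 / (2 * m - 1)) ≤ 4 * m ^ 2 := by
    rw [mul_one_div, div_le_iff₀ (by linarith)]
    nlinarith
  rw [hratio, hsq]
  linarith

/-- `log N(v) = O(v^{2/3})`: there is a constant `C` with
`N(v) ≤ exp(C (v^{2/3} + 1))` for all `v ≥ 0`. -/
theorem numPP_le_exp_cbrt_sq :
    ∃ C : ℝ, ∀ v : ℕ, (numPP v : ℝ) ≤ Real.exp (C * ((v : ℝ) ^ ((2 : ℝ) / 3) + 1)) := by
  refine ⟨16, fun v => ?_⟩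
  set a := (v : ℝ) ^ ((1 : ℝ) / 3)
  have ha : 0 ≤ a := by positivity
  have hcube : a ^ 3 = v := by
    rw [← rpow_natCast, ← rpow_mul (Nat.cast_nonneg v)]
    norm_num
  have hsq : a ^ 2 = (v : ℝ) ^ ((2 : ℝ) / 3) := by
    rw [← rpow_natCast, ← rpow_mul (Nat.cast_nonneg v)]
    norm_num
  calc (numPP v : ℝ) ≤ exp (8 * (a + 1) ^ 2) :=
        numPP_le_exp_of_le_cube v (by linarith) (by nlinarith)
    _ ≤ exp (16 * ((v : ℝ) ^ ((2 : ℝ) / 3) + 1)) :=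
        exp_le_exp.2 (by rw [← hsq]; nlinarith [sq_nonneg (a - 1)])
end

section
/- Fix M ≥ 1 and partition the cube C_M = [0,M]³ into M³ unit cubes labeled by r = (r₁,r₂,r₃) ∈ {0,…,M−1}³. For η ∈ Ω^0_{M,2M} (M ordered lattice paths of length 2M from 0 to 0), define s(η) as the union of unit cubes r such that η^{(M−r₃)}(M−r₁+r₂) < M−r₁−r₂. Then s(η) is a monotone (downward-closed) subset of the cube: if r ∈ s(η) and r'ᵢ ≤ rᵢ for i = 1,2,3 (with r' ∈ {0,…,M−1}³), then r' ∈ s(η). -/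
/-!
Each coordinate can be lowered one unit at a time. Lowering `r₁` or `r₂` by one moves the
evaluation point of the path by one step while raising the threshold `M - r₁ - r₂` by one,
so the `±1` increments keep the strict inequality. Lowering `r₃` by one replaces the path
`η^{(M-r₃)}` by `η^{(M-r₃+1)}`, which lies below it at every point.
-/

/-- The unit cube labeled `r = (r₁,r₂,r₃)` belongs to the set `s(η)` associated to the
`M`-tuple of paths `η` (indexed `1,…,M`) iff `η^{(M-r₃)}(M-r₁+r₂) < M-r₁-r₂`. -/
def inCubeSet (M : ℕ) (η : ℕ → ℕ → ℤ) (r : ℕ × ℕ × ℕ) : Prop :=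
  r.1 < M ∧ r.2.1 < M ∧ r.2.2 < M ∧
    η (M - r.2.2) (M - r.1 + r.2.1) < (M : ℤ) - (r.1 : ℤ) - (r.2.1 : ℤ)

namespace inCubeSet

variable {M : ℕ} {η : ℕ → ℕ → ℤ} {a b c : ℕ}

theorem of_succ_fst (hup : ∀ j, 1 ≤ j → j ≤ M → ∀ x < 2 * M, η j (x + 1) ≤ η j x + 1)
    (h : inCubeSet M η (a + 1, b, c)) : inCubeSet M η (a, b, c) := by
  simp only [inCubeSet] at h ⊢
  obtain ⟨ha, hb, hc, hlt⟩ := h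
  refine ⟨by omega, hb, hc, ?_⟩
  have hx : M - a + b = M - (a + 1) + b + 1 := by omega
  have := hup (M - c) (by omega) (by omega) (M - (a + 1) + b) (by omega)
  simp only [hx] at hlt ⊢
  push_cast at hlt
  linarith

theorem of_succ_snd (hdown : ∀ j, 1 ≤ j → j ≤ M → ∀ x < 2 * M, η j x ≤ η j (x + 1) + 1)
    (h : inCubeSet M η (a, b + 1, c)) : inCubeSet M η (a, b, c) := by
  simp only [inCubeSet] at h ⊢
  obtain ⟨ha, hb, hc, hlt⟩ := h
  refine ⟨ha, by omega, hc, ?_⟩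
  have hx : M - a + (b + 1) = M - a + b + 1 := by omega
  have := hdown (M - c) (by omega) (by omega) (M - a + b) (by omega)
  simp only [hx] at hlt
  push_cast at hlt
  linarith

theorem of_succ_thd (horder : ∀ j, 1 ≤ j → j + 1 ≤ M → ∀ x ≤ 2 * M, η (j + 1) x ≤ η j x)
    (h : inCubeSet M η (a, b, c + 1)) : inCubeSet M η (a, b, c) := by
  simp only [inCubeSet] at h ⊢
  obtain ⟨ha, hb, hc, hlt⟩ := h
  refine ⟨ha, hb, by omega, ?_⟩
  have hj : M - c = M - (c + 1) + 1 := by omega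
  have := horder (M - (c + 1)) (by omega) (by omega) (M - a + b) (by omega)
  simp only [hj]
  linarith

end inCubeSet

theorem cubeSet_monotone_general (M : ℕ) (η : ℕ → ℕ → ℤ)
    (hstep : ∀ j : ℕ, 1 ≤ j → j ≤ M → ∀ x : ℕ, x < 2 * M →
      η j (x + 1) - η j x = 1 ∨ η j (x + 1) - η j x = -1)
    (horder : ∀ j : ℕ, 1 ≤ j → j + 1 ≤ M → ∀ x : ℕ, x ≤ 2 * M → η (j + 1) x ≤ η j x) :
    ∀ r r' : ℕ × ℕ × ℕ, inCubeSet M η r →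
      r'.1 ≤ r.1 → r'.2.1 ≤ r.2.1 → r'.2.2 ≤ r.2.2 → inCubeSet M η r' := by
  have hup : ∀ j, 1 ≤ j → j ≤ M → ∀ x < 2 * M, η j (x + 1) ≤ η j x + 1 := fun j h₁ h₂ x hx => by
    rcases hstep j h₁ h₂ x hx with h | h <;> omega
  have hdown : ∀ j, 1 ≤ j → j ≤ M → ∀ x < 2 * M, η j x ≤ η j (x + 1) + 1 := fun j h₁ h₂ x hx => by
    rcases hstep j h₁ h₂ x hx with h | h <;> omega
  rintro ⟨a, b, c⟩ ⟨a', b', c'⟩ h ha hb hc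
  have h₃ : inCubeSet M η (a, b, c') :=
    antitone_nat_of_succ_le (f := fun c => inCubeSet M η (a, b, c))
      (fun _ => inCubeSet.of_succ_thd horder) hc h
  have h₂ : inCubeSet M η (a, b', c') :=
    antitone_nat_of_succ_le (f := fun b => inCubeSet M η (a, b, c'))
      (fun _ => inCubeSet.of_succ_snd hdown) hb h₃
  exact antitone_nat_of_succ_le (f := fun a => inCubeSet M η (a, b', c'))
    (fun _ => inCubeSet.of_succ_fst hup) ha h₂

/-- For a configuration of `M` ordered nearest-neighbor paths of length `2M` from `0` to `0`,
the associated subset `s(η)` of the cube is monotone (downward-closed). -/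
theorem cubeSet_monotone (M : ℕ) (hM : 1 ≤ M) (η : ℕ → ℕ → ℤ)
    (hstart : ∀ j : ℕ, 1 ≤ j → j ≤ M → η j 0 = 0)
    (hend : ∀ j : ℕ, 1 ≤ j → j ≤ M → η j (2 * M) = 0)
    (hstep : ∀ j : ℕ, 1 ≤ j → j ≤ M → ∀ x : ℕ, x < 2 * M →
      η j (x + 1) - η j x = 1 ∨ η j (x + 1) - η j x = -1)
    (horder : ∀ j : ℕ, 1 ≤ j → j + 1 ≤ M → ∀ x : ℕ, x ≤ 2 * M → η (j + 1) x ≤ η j x) :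
    ∀ r r' : ℕ × ℕ × ℕ, inCubeSet M η r →
      r'.1 ≤ r.1 → r'.2.1 ≤ r.2.1 → r'.2.2 ≤ r.2.2 → inCubeSet M η r' :=
  cubeSet_monotone_general M η hstep horder
end
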